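/- arXiv:2311.06525 — 7 statements merged into one kernel-verified Lean document; each statement's English description precedes it below -/
import Mathlib

section
/- For all p, q in (1, ∞), the inequality ((p-1)/p)^(1/q - 1/p) · (p/q)^(1/q) ≥ (((p-1)/p)^((p-1)/p)) / (((q-1)/q)^((q-1)/q)) holds. -/
/-!
With `a = (p - 1) / p` and `b = (q - 1) / q` we have `1 / p = 1 - a`, `1 / q = 1 - b` and
`p / q = (1 - b) / (1 - a)`, and the inequality becomes
`(a / b) ^ b * ((1 - a) / (1 - b)) ^ (1 - b) ≤ 1`. This is the weighted AM-GM inequality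
with weights `b, 1 - b`, whose arithmetic mean is `b * (a / b) + (1 - b) * ((1 - a) / (1 - b)) = 1`;
equivalently, the Kullback–Leibler divergence between Bernoulli(b) and Bernoulli(a) is nonnegative.
-/

open Real

namespace Real

theorem div_rpow_mul_one_sub_div_rpow_le_one {a b : ℝ} (ha₀ : 0 ≤ a) (ha₁ : a ≤ 1)
    (hb₀ : 0 < b) (hb₁ : b < 1) :
    (a / b) ^ b * ((1 - a) / (1 - b)) ^ (1 - b) ≤ 1 := by
  have hb₁' : 0 < 1 - b := sub_pos.mpr hb₁
  calc (a / b) ^ b * ((1 - a) / (1 - b)) ^ (1 - b)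
      ≤ b * (a / b) + (1 - b) * ((1 - a) / (1 - b)) :=
        geom_mean_le_arith_mean2_weighted hb₀.le hb₁'.le (div_nonneg ha₀ hb₀.le)
          (div_nonneg (sub_nonneg.mpr ha₁) hb₁'.le) (add_sub_cancel b 1)
    _ = 1 := by field_simp; ring

theorem rpow_self_div_rpow_self_le {a b : ℝ} (ha₀ : 0 < a) (ha₁ : a < 1)
    (hb₀ : 0 < b) (hb₁ : b < 1) :
    a ^ a / b ^ b ≤ a ^ (a - b) * ((1 - b) / (1 - a)) ^ (1 - b) := by
  have hratio : 0 < ((1 - b) / (1 - a)) ^ (1 - b) :=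
    rpow_pos_of_pos (div_pos (sub_pos.mpr hb₁) (sub_pos.mpr ha₁)) _
  have hsplit : a ^ a / b ^ b = a ^ (a - b) * (a / b) ^ b := by
    rw [rpow_sub ha₀, div_rpow ha₀.le hb₀.le]
    field_simp
  have hAMGM := div_rpow_mul_one_sub_div_rpow_le_one ha₀.le ha₁.le hb₀ hb₁
  rw [← inv_div (1 - b) (1 - a), inv_rpow (div_nonneg (sub_pos.mpr hb₁).le (sub_pos.mpr ha₁).le),
    ← div_eq_mul_inv, div_le_one hratio] at hAMGM
  rw [hsplit]
  gcongr

end Real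

theorem stmt_0 (p q : ℝ) (hp : 1 < p) (hq : 1 < q) :
    ((p - 1) / p) ^ (1 / q - 1 / p) * (p / q) ^ (1 / q) ≥
      ((p - 1) / p) ^ ((p - 1) / p) / ((q - 1) / q) ^ ((q - 1) / q) := by
  have hp₀ : 0 < p := one_pos.trans hp
  have hq₀ : 0 < q := one_pos.trans hq
  have hinv_p : 1 - (p - 1) / p = 1 / p := by field_simp; ring
  have hinv_q : 1 - (q - 1) / q = 1 / q := by field_simp; ring
  have hexp : 1 / q - 1 / p = (p - 1) / p - (q - 1) / q := by
    rw [← hinv_p, ← hinv_q]; ring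
  have hpq : p / q = (1 - (q - 1) / q) / (1 - (p - 1) / p) := by
    rw [hinv_p, hinv_q]; field_simp
  rw [ge_iff_le, hexp, hpq, ← hinv_q]
  exact rpow_self_div_rpow_self_le (div_pos (by linarith) hp₀) (by rw [div_lt_one hp₀]; linarith)
    (div_pos (by linarith) hq₀) (by rw [div_lt_one hq₀]; linarith)
end

section
/- For all real numbers p, q > 1, (p'/q')^(1/q') · (p/q)^(1/q) ≥ 1, where p' = p/(p-1) and q' = q/(q-1) are the conjugate exponents. -/
/-!
Weighted AM–GM with the weights `1/q'` and `1/q` (which sum to `1`) gives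
`(q'/p')^(1/q') (q/p)^(1/q) ≤ (1/q')(q'/p') + (1/q)(q/p) = 1/p' + 1/p = 1`;
the theorem is the reciprocal of this bound.
-/

namespace Real.HolderConjugate

variable {p p' q q' : ℝ}

lemma div_rpow_mul_div_rpow_le_one (hp : p.HolderConjugate p') (hq : q.HolderConjugate q') :
    (q' / p') ^ (1 / q') * (q / p) ^ (1 / q) ≤ 1 :=
  calc (q' / p') ^ (1 / q') * (q / p) ^ (1 / q)
      ≤ 1 / q' * (q' / p') + 1 / q * (q / p) :=
        geom_mean_le_arith_mean2_weighted hq.symm.one_div_nonneg hq.one_div_nonneg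
          (div_nonneg hq.symm.nonneg hp.symm.nonneg) (div_nonneg hq.nonneg hp.nonneg)
          (by simpa [add_comm] using hq.inv_add_inv_eq_one)
    _ = 1 := by
        field_simp [hq.ne_zero, hq.symm.ne_zero]
        simpa [add_comm, one_div] using hp.inv_add_inv_eq_one

lemma one_le_div_rpow_mul_div_rpow (hp : p.HolderConjugate p') (hq : q.HolderConjugate q') :
    1 ≤ (p' / q') ^ (1 / q') * (p / q) ^ (1 / q) := by
  have hpos : 0 < (q' / p') ^ (1 / q') * (q / p) ^ (1 / q) := by
    have := hp.pos; have := hp.symm.pos; have := hq.pos; have := hq.symm.pos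
    positivity
  rw [← inv_div q', ← inv_div q, inv_rpow (div_nonneg hq.symm.nonneg hp.symm.nonneg),
    inv_rpow (div_nonneg hq.nonneg hp.nonneg), ← mul_inv, one_le_inv₀ hpos]
  exact div_rpow_mul_div_rpow_le_one hp hq

end Real.HolderConjugate

theorem stmt_1 (p q : ℝ) (hp : 1 < p) (hq : 1 < q) :
    ((p / (p - 1)) / (q / (q - 1))) ^ (1 / (q / (q - 1))) * (p / q) ^ (1 / q) ≥ 1 :=
  (Real.HolderConjugate.conjExponent hp).one_le_div_rpow_mul_div_rpow
    (Real.HolderConjugate.conjExponent hq)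
end

section
/- For all real numbers p, q > 1 with p ≠ q, the strict inequality ((q-1)/q)^(1/q - 1/p) · (p/q)^(1/p) < ((p-1)/p)^(1/q - 1/p) · (p/q)^(1/q) holds. -/
/-! Writing `t = 1/q - 1/p` and dividing by `(p/q)^(1/p)`, the inequality becomes
`((q-1)/q)^t < ((p-1)/q)^t`. Since `t = (p-q)/(pq)` has the sign of `(p-1) - (q-1)`,
this is strict monotonicity (for `t > 0`) or strict antitonicity (for `t < 0`) of `x ↦ x^t`. -/

namespace Real

theorem rpow_lt_rpow_of_sub_mul_pos {a b t : ℝ} (ha : 0 < a) (hb : 0 < b)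
    (h : 0 < (b - a) * t) : a ^ t < b ^ t := by
  rcases mul_pos_iff.mp h with ⟨hab, ht⟩ | ⟨hab, ht⟩
  · exact rpow_lt_rpow ha.le (sub_pos.mp hab) ht
  · exact rpow_lt_rpow_of_neg hb (sub_neg.mp hab) ht

end Real

theorem stmt_2 (p q : ℝ) (hp : 1 < p) (hq : 1 < q) (hpq : p ≠ q) :
    ((q - 1) / q) ^ (1 / q - 1 / p) * (p / q) ^ (1 / p) <
      ((p - 1) / p) ^ (1 / q - 1 / p) * (p / q) ^ (1 / q) := by
  have hp0 : 0 < p := by linarith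
  have hq0 : 0 < q := by linarith
  set t := 1 / q - 1 / p with ht
  have key : ((q - 1) / q) ^ t < ((p - 1) / q) ^ t := by
    refine Real.rpow_lt_rpow_of_sub_mul_pos (by positivity) (div_pos (by linarith) hq0) ?_
    have same_sign : ((p - 1) / q - (q - 1) / q) * t = (p - q) ^ 2 / (p * q ^ 2) := by
      rw [ht]; field_simp; ring
    have hpq' : p - q ≠ 0 := sub_ne_zero.mpr hpq
    rw [same_sign]
    positivity
  have rhs : ((p - 1) / p) ^ t * (p / q) ^ (1 / q) = ((p - 1) / q) ^ t * (p / q) ^ (1 / p) := by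
    have split : (p / q) ^ (1 / q) = (p / q) ^ t * (p / q) ^ (1 / p) := by
      rw [← Real.rpow_add (by positivity), ht, sub_add_cancel]
    rw [split, ← mul_assoc, ← Real.mul_rpow (by bound) (by positivity)]
    congr 2
    field_simp
  rw [rhs]
  exact mul_lt_mul_of_pos_right key (by positivity)
end

section
/- Let u : (0,∞) → [0,∞) be measurable with distribution function bounded appropriately, and let u* denote its decreasing rearrangement u*(s) = sup{t ≥ 0 : |{u > t}| > s}. Then for every p > 1, ∫₀^∞ t^(p-1) u*(t) dt ≤ ∫₀^∞ t^(p-1) u(t) dt. -/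
/-!
Weighting Lebesgue measure on `(0,∞)` by the increasing density `w(t) = t^(p-1)` and applying
the layer cake formula, it suffices to compare the weighted measures of the level sets
`{u* > s}` and `{u > s}` for every `s > 0`. The first lies in `[0, c)` with `c = |{u > s}|`, and
among all subsets of `[0,∞)` of measure `c` the interval `[0, c)` carries the least weight,
because `w` is increasing (bathtub principle).
-/

open MeasureTheory Set Filter Topology
open scoped ENNReal

section Rearrangement

variable {α : Type*} [MeasurableSpace α] {μ : Measure α} {u : α → ℝ}

-- `sSup` of an unbounded set of reals is `0`, so at `s` this is the true rearrangement only if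
-- `μ {u > t} ≤ s` for large `t`.
noncomputable def decreasingRearrangement (μ : Measure α) (u : α → ℝ) (s : ℝ) : ℝ :=
  sSup {t : ℝ | 0 ≤ t ∧ ENNReal.ofReal s < μ {x | t < u x}}

lemma decreasingRearrangement_nonneg (s : ℝ) : 0 ≤ decreasingRearrangement μ u s :=
  Real.sSup_nonneg fun _ ht => ht.1

lemma lt_measure_of_lt_decreasingRearrangement {s t : ℝ} (hs : 0 ≤ s)
    (h : s < decreasingRearrangement μ u t) : ENNReal.ofReal t < μ {x | s < u x} := by
  unfold decreasingRearrangement at h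
  have hne : {a : ℝ | 0 ≤ a ∧ ENNReal.ofReal t < μ {x | a < u x}}.Nonempty := by
    by_contra hempty
    rw [not_nonempty_iff_eq_empty.mp hempty, Real.sSup_empty] at h
    linarith
  obtain ⟨a, ⟨-, ha⟩, hsa⟩ := exists_lt_of_lt_csSup hne h
  exact ha.trans_le (measure_mono fun x hx => hsa.trans hx)

lemma tendsto_measure_setOf_lt_atTop (hu : AEMeasurable u μ) (hfin : ∃ a, μ {x | a < u x} ≠ ∞) :
    Tendsto (fun a : ℝ => μ {x | a < u x}) atTop (𝓝 0) := by
  have hempty : ⋂ a : ℝ, {x | a < u x} = ∅ :=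
    eq_empty_of_forall_notMem fun x hx => lt_irrefl (u x) (mem_iInter.mp hx (u x))
  have := tendsto_measure_iInter_atTop (fun a => nullMeasurableSet_lt aemeasurable_const hu)
    (fun _ _ hab _ hx => hab.trans_lt hx) hfin
  rwa [hempty, measure_empty] at this

lemma decreasingRearrangement_antitoneOn
    (hu : Tendsto (fun a : ℝ => μ {x | a < u x}) atTop (𝓝 0)) :
    AntitoneOn (decreasingRearrangement μ u) (Ioi 0) := by
  intro t₁ (ht₁ : 0 < t₁) t₂ _ ht
  have hbdd : BddAbove {a : ℝ | 0 ≤ a ∧ ENNReal.ofReal t₁ < μ {x | a < u x}} := by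
    obtain ⟨N, hN⟩ := (hu.eventually (gt_mem_nhds (ENNReal.ofReal_pos.mpr ht₁))).exists_forall_of_atTop
    exact ⟨N, fun a ha => le_of_not_ge fun hNa => (hN a hNa).not_gt ha.2⟩
  rcases eq_empty_or_nonempty {a : ℝ | 0 ≤ a ∧ ENNReal.ofReal t₂ < μ {x | a < u x}} with h | h
  · unfold decreasingRearrangement
    rw [h, Real.sSup_empty]
    exact decreasingRearrangement_nonneg t₁
  · exact csSup_le_csSup hbdd h fun a ha => ⟨ha.1, (ENNReal.ofReal_le_ofReal ht).trans_lt ha.2⟩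

end Rearrangement

lemma setLIntegral_Ico_le_of_monotoneOn {w : ℝ → ℝ≥0∞} (hw : MonotoneOn w (Ici 0)) {E : Set ℝ}
    (hE : MeasurableSet E) (hE0 : E ⊆ Ici 0) (hEfin : volume E ≠ ∞) :
    ∫⁻ t in Ico 0 (volume E).toReal, w t ≤ ∫⁻ t in E, w t := by
  set c := (volume E).toReal
  have hc : c ∈ Ici 0 := ENNReal.toReal_nonneg
  have hvol : volume (Ico 0 c) = volume E := by
    rw [Real.volume_Ico, sub_zero, ENNReal.ofReal_toReal hEfin]
  have hdiff : volume (Ico 0 c \ E) = volume (E \ Ico 0 c) :=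
    measure_sdiff_symm measurableSet_Ico.nullMeasurableSet hE.nullMeasurableSet hvol
      (measure_ne_top_of_subset inter_subset_left (hvol ▸ hEfin))
  have hout : ∫⁻ t in Ico 0 c \ E, w t ≤ ∫⁻ t in E \ Ico 0 c, w t :=
    calc ∫⁻ t in Ico 0 c \ E, w t
        ≤ ∫⁻ _ in Ico 0 c \ E, w c :=
          setLIntegral_mono' (measurableSet_Ico.diff hE) fun x hx => hw hx.1.1 hc hx.1.2.le
      _ = ∫⁻ _ in E \ Ico 0 c, w c := by rw [setLIntegral_const, setLIntegral_const, hdiff]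
      _ ≤ ∫⁻ t in E \ Ico 0 c, w t :=
          setLIntegral_mono' (hE.diff measurableSet_Ico) fun x hx =>
            hw hc (hE0 hx.1) (le_of_not_gt fun hxc => hx.2 ⟨hE0 hx.1, hxc⟩)
  rw [← lintegral_inter_add_sdiff w (Ico 0 c) hE, ← lintegral_inter_add_sdiff w E measurableSet_Ico,
    inter_comm]
  gcongr

lemma lintegral_mul_ofReal_le_of_setLIntegral_le {α : Type*} [MeasurableSpace α] {μ : Measure α}
    [SFinite μ] {w : α → ℝ≥0∞} (hw : AEMeasurable w μ) {f g : α → ℝ} (hf0 : 0 ≤ᵐ[μ] f)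
    (hg0 : 0 ≤ᵐ[μ] g) (hf : AEMeasurable f μ) (hg : AEMeasurable g μ)
    (h : ∀ s > 0, ∫⁻ x in {x | s < f x}, w x ∂μ ≤ ∫⁻ x in {x | s < g x}, w x ∂μ) :
    ∫⁻ x, w x * ENNReal.ofReal (f x) ∂μ ≤ ∫⁻ x, w x * ENNReal.ofReal (g x) ∂μ := by
  have hac := withDensity_absolutelyContinuous μ w
  calc ∫⁻ x, w x * ENNReal.ofReal (f x) ∂μ
      = ∫⁻ x, ENNReal.ofReal (f x) ∂μ.withDensity w :=
        (lintegral_withDensity_eq_lintegral_mul₀ hw hf.ennreal_ofReal).symm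
    _ = ∫⁻ s in Ioi 0, μ.withDensity w {x | s < f x} :=
        lintegral_eq_lintegral_meas_lt _ (hac.ae_le hf0) (hf.mono_ac hac)
    _ ≤ ∫⁻ s in Ioi 0, μ.withDensity w {x | s < g x} :=
        setLIntegral_mono' measurableSet_Ioi fun s hs => by
          simpa only [withDensity_apply'] using h s hs
    _ = ∫⁻ x, ENNReal.ofReal (g x) ∂μ.withDensity w :=
        (lintegral_eq_lintegral_meas_lt _ (hac.ae_le hg0) (hg.mono_ac hac)).symm
    _ = ∫⁻ x, w x * ENNReal.ofReal (g x) ∂μ :=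
        lintegral_withDensity_eq_lintegral_mul₀ hw hg.ennreal_ofReal

theorem setLIntegral_mul_decreasingRearrangement_le {w : ℝ → ℝ≥0∞} (hw : MonotoneOn w (Ici 0))
    {u : ℝ → ℝ} (hu : Measurable u) (hu0 : ∀ t, 0 ≤ u t)
    (hfin : ∀ s > 0, volume.restrict (Ioi 0) {x | s < u x} ≠ ∞) :
    ∫⁻ t in Ioi 0, w t * ENNReal.ofReal (decreasingRearrangement (volume.restrict (Ioi 0)) u t) ≤
      ∫⁻ t in Ioi 0, w t * ENNReal.ofReal (u t) := by
  set ustar := decreasingRearrangement (volume.restrict (Ioi (0 : ℝ))) u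
  have hw_meas : AEMeasurable w (volume.restrict (Ioi 0)) :=
    (aemeasurable_restrict_of_monotoneOn measurableSet_Ici hw).mono_measure
      (Measure.restrict_mono Ioi_subset_Ici_self le_rfl)
  have hustar_meas : AEMeasurable ustar (volume.restrict (Ioi 0)) :=
    aemeasurable_restrict_of_antitoneOn measurableSet_Ioi <|
      decreasingRearrangement_antitoneOn <|
        tendsto_measure_setOf_lt_atTop hu.aemeasurable ⟨1, hfin 1 one_pos⟩
  refine lintegral_mul_ofReal_le_of_setLIntegral_le hw_meas
    (.of_forall decreasingRearrangement_nonneg) (.of_forall hu0) hustar_meas hu.aemeasurable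
    fun s hs => ?_
  set E := {x | s < u x} ∩ Ioi 0
  have hE : volume.restrict (Ioi 0) {x | s < u x} = volume E :=
    Measure.restrict_apply' measurableSet_Ioi
  have hEfin : volume E ≠ ∞ := hE ▸ hfin s hs
  have hsub : {t | s < ustar t} ∩ Ioi 0 ⊆ Ico 0 (volume E).toReal := fun t ht =>
    ⟨le_of_lt ht.2, (ENNReal.ofReal_lt_iff_lt_toReal (le_of_lt ht.2) hEfin).mp
      (hE ▸ lt_measure_of_lt_decreasingRearrangement hs.le ht.1)⟩
  rw [Measure.restrict_restrict' measurableSet_Ioi, Measure.restrict_restrict' measurableSet_Ioi]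
  calc ∫⁻ t in {t | s < ustar t} ∩ Ioi 0, w t
      ≤ ∫⁻ t in Ico 0 (volume E).toReal, w t := lintegral_mono_set hsub
    _ ≤ ∫⁻ t in E, w t :=
        setLIntegral_Ico_le_of_monotoneOn hw ((hu measurableSet_Ioi).inter measurableSet_Ioi)
          (inter_subset_right.trans Ioi_subset_Ici_self) hEfin

theorem stmt_6 (p : ℝ) (hp : 1 < p)
    (u : ℝ → ℝ) (hmeas : Measurable u) (hnonneg : ∀ t, 0 ≤ u t)
    (hfin : ∀ t > (0:ℝ), volume {x ∈ Set.Ioi (0:ℝ) | t < u x} < ⊤)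
    (ustar : ℝ → ℝ)
    (hustar : ∀ s : ℝ, ustar s =
      sSup {t : ℝ | 0 ≤ t ∧ ENNReal.ofReal s < volume {x ∈ Set.Ioi (0:ℝ) | t < u x}}) :
    (∫⁻ t in Set.Ioi (0:ℝ), ENNReal.ofReal (t ^ (p - 1) * ustar t)) ≤
      ∫⁻ t in Set.Ioi (0:ℝ), ENNReal.ofReal (t ^ (p - 1) * u t) := by
  have hlevel : ∀ t, volume {x ∈ Ioi (0 : ℝ) | t < u x} = volume.restrict (Ioi 0) {x | t < u x} :=
    fun t => by rw [Measure.restrict_apply' measurableSet_Ioi, inter_comm]; rfl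
  have hustar_eq : ustar = decreasingRearrangement (volume.restrict (Ioi 0)) u := by
    funext s
    simp only [hustar, hlevel]
    rfl
  have hweight : MonotoneOn (fun t : ℝ => ENNReal.ofReal (t ^ (p - 1))) (Ici 0) :=
    fun a ha b _ hab => ENNReal.ofReal_le_ofReal (Real.rpow_le_rpow ha hab (by linarith))
  have hsplit : ∀ f : ℝ → ℝ, ∫⁻ t in Ioi 0, ENNReal.ofReal (t ^ (p - 1) * f t) =
      ∫⁻ t in Ioi 0, ENNReal.ofReal (t ^ (p - 1)) * ENNReal.ofReal (f t) := fun f =>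
    setLIntegral_congr_fun measurableSet_Ioi fun t ht =>
      ENNReal.ofReal_mul (Real.rpow_nonneg (le_of_lt ht) _)
  rw [hsplit, hsplit, hustar_eq]
  exact setLIntegral_mul_decreasingRearrangement_le hweight hmeas hnonneg fun s hs =>
    (hlevel s ▸ hfin s hs).ne
end

section
/- Let p, q > 1 with p ≠ q and 0 < δ < 1. Then (⨍_{1-δ}^1 τ^p dτ)(⨍_{1-δ}^1 τ^{q-1} dτ) - (⨍_{1-δ}^1 τ^q dτ)(⨍_{1-δ}^1 τ^{p-1} dτ) ≠ 0, where ⨍ denotes the average integral (1/δ)∫. -/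
/-!
With the weight `w x = x ^ (q - 1)` and `φ x = x ^ (p - q)` the four integrals are `∫ w`, `∫ x w`,
`∫ φ w` and `∫ x φ w`, so up to the factor `δ⁻²` the quantity is the Chebyshev difference
`∫ w · ∫ x φ w - ∫ x w · ∫ φ w` of the two functions `x` and `φ`, both strictly increasing when
`p > q`. Centering at the `w`-mean `c` of `x` rewrites it as `∫ w · ∫ (x - c) (φ x - φ c) w`,
whose integrand is nonnegative and vanishes only at `x = c`.
-/

open intervalIntegral Set

lemma StrictMonoOn.sub_mul_sub_pos {s : Set ℝ} {φ : ℝ → ℝ} (hφ : StrictMonoOn φ s)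
    {x c : ℝ} (hx : x ∈ s) (hc : c ∈ s) (hxc : x ≠ c) : 0 < (x - c) * (φ x - φ c) := by
  rcases hxc.lt_or_gt with h | h
  · exact mul_pos_of_neg_of_neg (sub_neg.2 h) (sub_neg.2 (hφ hx hc h))
  · exact mul_pos (sub_pos.2 h) (sub_pos.2 (hφ hc hx h))

lemma StrictMonoOn.sub_mul_sub_nonneg {s : Set ℝ} {φ : ℝ → ℝ} (hφ : StrictMonoOn φ s)
    {x c : ℝ} (hx : x ∈ s) (hc : c ∈ s) : 0 ≤ (x - c) * (φ x - φ c) := by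
  rcases eq_or_ne x c with rfl | hxc
  · simp
  · exact (hφ.sub_mul_sub_pos hx hc hxc).le

section Chebyshev

variable {a b : ℝ} {w φ : ℝ → ℝ}

lemma integral_sub_mul_sub_mul (hw : ContinuousOn w (uIcc a b)) (hφ : ContinuousOn φ (uIcc a b))
    (c : ℝ) :
    ∫ x in a..b, (x - c) * (φ x - φ c) * w x =
      (∫ x in a..b, x * φ x * w x) - c * (∫ x in a..b, φ x * w x)
        - φ c * (∫ x in a..b, x * w x) + c * φ c * ∫ x in a..b, w x := by
  have hfun : (fun x => (x - c) * (φ x - φ c) * w x) =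
      fun x => x * φ x * w x - c * (φ x * w x) - φ c * (x * w x) + c * φ c * w x := by
    funext x; ring
  have i1 : IntervalIntegrable (fun x => x * φ x * w x) MeasureTheory.volume a b :=
    (by fun_prop : ContinuousOn _ _).intervalIntegrable
  have i2 : IntervalIntegrable (fun x => φ x * w x) MeasureTheory.volume a b :=
    (by fun_prop : ContinuousOn _ _).intervalIntegrable
  have i3 : IntervalIntegrable (fun x => x * w x) MeasureTheory.volume a b :=
    (by fun_prop : ContinuousOn _ _).intervalIntegrable
  have i4 : IntervalIntegrable w MeasureTheory.volume a b := hw.intervalIntegrable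
  rw [hfun, integral_add ((i1.sub (i2.const_mul c)).sub (i3.const_mul (φ c))) (i4.const_mul _),
    integral_sub (i1.sub (i2.const_mul c)) (i3.const_mul (φ c)), integral_sub i1 (i2.const_mul c),
    integral_const_mul, integral_const_mul, integral_const_mul]

lemma integral_id_mul_mem_Icc (hab : a ≤ b) (hw : ContinuousOn w (Icc a b))
    (hw0 : ∀ x ∈ Icc a b, 0 ≤ w x) :
    ∫ x in a..b, x * w x ∈ Icc (a * ∫ x in a..b, w x) (b * ∫ x in a..b, w x) := by
  have hcont : ContinuousOn (fun x => x * w x) (Icc a b) := by fun_prop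
  rw [← integral_const_mul, ← integral_const_mul]
  exact ⟨integral_mono_on hab ((hw.const_smul a).intervalIntegrable_of_Icc hab)
      (hcont.intervalIntegrable_of_Icc hab) fun x hx => mul_le_mul_of_nonneg_right hx.1 (hw0 x hx),
    integral_mono_on hab (hcont.intervalIntegrable_of_Icc hab)
      ((hw.const_smul b).intervalIntegrable_of_Icc hab)
      fun x hx => mul_le_mul_of_nonneg_right hx.2 (hw0 x hx)⟩

/-- Strict Chebyshev integral inequality for the pair `x ↦ x`, `φ`. -/
theorem integral_mul_integral_lt_of_strictMonoOn (hab : a < b) (hw : ContinuousOn w (Icc a b))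
    (hφ : ContinuousOn φ (Icc a b)) (hw0 : ∀ x ∈ Icc a b, 0 < w x)
    (hφm : StrictMonoOn φ (Icc a b)) :
    (∫ x in a..b, x * w x) * (∫ x in a..b, φ x * w x) <
      (∫ x in a..b, w x) * ∫ x in a..b, x * φ x * w x := by
  have hW : 0 < ∫ x in a..b, w x :=
    integral_pos hab hw (fun x hx => (hw0 x (Ioc_subset_Icc_self hx)).le)
      ⟨a, left_mem_Icc.2 hab.le, hw0 a (left_mem_Icc.2 hab.le)⟩
  obtain ⟨c, hc, hcW⟩ : ∃ c ∈ Icc a b, c * (∫ x in a..b, w x) = ∫ x in a..b, x * w x := by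
    obtain ⟨h₁, h₂⟩ := integral_id_mul_mem_Icc hab.le hw fun x hx => (hw0 x hx).le
    exact ⟨_, ⟨(le_div_iff₀ hW).2 h₁, (div_le_iff₀ hW).2 h₂⟩, div_mul_cancel₀ _ hW.ne'⟩
  have hpos : 0 < ∫ x in a..b, (x - c) * (φ x - φ c) * w x := by
    refine integral_pos hab (by fun_prop) (fun x hx => ?_) ?_
    · exact mul_nonneg (hφm.sub_mul_sub_nonneg (Ioc_subset_Icc_self hx) hc)
        (hw0 x (Ioc_subset_Icc_self hx)).le
    · obtain ⟨x, hx, hxc⟩ : ∃ x ∈ Icc a b, x ≠ c := by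
        rcases eq_or_ne a c with rfl | h
        · exact ⟨b, right_mem_Icc.2 hab.le, hab.ne'⟩
        · exact ⟨a, left_mem_Icc.2 hab.le, h⟩
      exact ⟨x, hx, mul_pos (hφm.sub_mul_sub_pos hx hc hxc) (hw0 x hx)⟩
  rw [integral_sub_mul_sub_mul (by rwa [uIcc_of_le hab.le]) (by rwa [uIcc_of_le hab.le]),
    ← hcW] at hpos
  rw [← hcW]
  nlinarith [mul_pos hW hpos]

end Chebyshev

lemma integral_rpow_mul_integral_rpow_lt {a b p q : ℝ} (ha : 0 < a) (hab : a < b) (hqp : q < p) :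
    (∫ x in a..b, x ^ q) * (∫ x in a..b, x ^ (p - 1)) <
      (∫ x in a..b, x ^ (q - 1)) * ∫ x in a..b, x ^ p := by
  have hpos : ∀ x ∈ Icc a b, 0 < x := fun x hx => ha.trans_le hx.1
  have hcont : ∀ r : ℝ, ContinuousOn (fun x : ℝ => x ^ r) (Icc a b) := fun r =>
    ContinuousOn.rpow_const (f := fun x => x) continuousOn_id fun x hx => Or.inl (hpos x hx).ne'
  have hmono : StrictMonoOn (fun x : ℝ => x ^ (p - q)) (Icc a b) :=
    (Real.strictMonoOn_rpow_Ici_of_exponent_pos (sub_pos.2 hqp)).mono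
      fun x hx => (hpos x hx).le
  have key := integral_mul_integral_lt_of_strictMonoOn hab (hcont (q - 1)) (hcont (p - q))
    (fun x hx => Real.rpow_pos_of_pos (hpos x hx) _) hmono
  have hpos' : ∀ x ∈ uIcc a b, 0 < x := by rwa [uIcc_of_le hab.le]
  have hid : ∀ x ∈ uIcc a b, x * x ^ (q - 1) = x ^ q ∧ x ^ (p - q) * x ^ (q - 1) = x ^ (p - 1) ∧
      x * x ^ (p - q) * x ^ (q - 1) = x ^ p := by
    intro x hx
    have hx0 := hpos' x hx
    simp only [Real.rpow_sub hx0, Real.rpow_one]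
    refine ⟨?_, ?_, ?_⟩ <;> field_simp
  rwa [integral_congr fun x hx => (hid x hx).1, integral_congr fun x hx => (hid x hx).2.1,
    integral_congr fun x hx => (hid x hx).2.2] at key

theorem stmt_11_general (p q δ : ℝ) (hpq : p ≠ q)
    (hδ0 : 0 < δ) (hδ1 : δ < 1) :
    ((1 / δ) * ∫ τ in (1 - δ)..1, τ ^ p) * ((1 / δ) * ∫ τ in (1 - δ)..1, τ ^ (q - 1)) -
      ((1 / δ) * ∫ τ in (1 - δ)..1, τ ^ q) * ((1 / δ) * ∫ τ in (1 - δ)..1, τ ^ (p - 1)) ≠ 0 := by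
  have ha : 0 < 1 - δ := by linarith
  have hab : 1 - δ < 1 := by linarith
  have key : (∫ τ in (1 - δ)..1, τ ^ p) * (∫ τ in (1 - δ)..1, τ ^ (q - 1)) -
      (∫ τ in (1 - δ)..1, τ ^ q) * (∫ τ in (1 - δ)..1, τ ^ (p - 1)) ≠ 0 := by
    rcases hpq.lt_or_gt with h | h <;> linarith [integral_rpow_mul_integral_rpow_lt ha hab h]
  rw [show ∀ A B C D : ℝ, 1 / δ * A * (1 / δ * B) - 1 / δ * C * (1 / δ * D) =
    (1 / δ) ^ 2 * (A * B - C * D) by intros; ring]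
  exact mul_ne_zero (by positivity) key

theorem stmt_11 (p q δ : ℝ) (hp : 1 < p) (hq : 1 < q) (hpq : p ≠ q)
    (hδ0 : 0 < δ) (hδ1 : δ < 1) :
    ((1 / δ) * ∫ τ in (1 - δ)..1, τ ^ p) * ((1 / δ) * ∫ τ in (1 - δ)..1, τ ^ (q - 1)) -
      ((1 / δ) * ∫ τ in (1 - δ)..1, τ ^ q) * ((1 / δ) * ∫ τ in (1 - δ)..1, τ ^ (p - 1)) ≠ 0 :=
  stmt_11_general p q δ hpq hδ0 hδ1
end

section
/- Let p > 1, d ≥ 1 an integer, and c > 0. Define u(t) = (1/d!)·[max(-log((c t)^(p-1)), 0)]^d for t > 0. Then p ∫₀^∞ t^{p-1} u(t) dt = ((p-1)/p)^d / c^p. -/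
/-!
Since `log ((c t) ^ (p - 1)) = (p - 1) log (c t)`, the integrand is a constant times
`t ^ (p - 1) * max (-log (c t)) 0 ^ d`. Scaling `t ↦ t / c` reduces to `c = 1`, where this vanishes
for `t ≥ 1` (as `d ≠ 0`), and the substitution `t = exp (-x)` turns `∫₀¹ t ^ (p - 1) (-log t) ^ d`
into the Gamma integral `∫₀^∞ x ^ d exp (-p x) = d! / p ^ (d + 1)`.
-/

open MeasureTheory Set Real

lemma image_exp_neg_Ioi_zero : (fun x : ℝ => exp (-x)) '' Ioi 0 = Ioo 0 1 := by
  rw [← image_image exp, image_neg_Ioi, neg_zero, image_exp_Iio, exp_zero]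

lemma integral_comp_exp_neg_Ioi_zero {E : Type*} [NormedAddCommGroup E] [NormedSpace ℝ E]
    (g : ℝ → E) : ∫ x in Ioi 0, exp (-x) • g (exp (-x)) = ∫ y in Ioo 0 1, g y := by
  rw [← image_exp_neg_Ioi_zero, integral_image_eq_integral_abs_deriv_smul measurableSet_Ioi
    (fun x _ => (hasDerivAt_neg' x).exp.hasDerivWithinAt)
    (fun x _ y _ hxy => neg_injective (exp_injective hxy))]
  simp [abs_of_pos (exp_pos _)]

lemma integral_Ioo_rpow_mul_neg_log_pow {a : ℝ} (ha : 0 < a) (n : ℕ) :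
    ∫ y in Ioo 0 1, y ^ (a - 1) * (-log y) ^ n = n.factorial / a ^ (n + 1) := by
  rw [← integral_comp_exp_neg_Ioi_zero]
  have h : ∀ x ∈ Ioi (0 : ℝ), exp (-x) • (exp (-x) ^ (a - 1) * (-log (exp (-x))) ^ n)
      = x ^ ((n + 1 : ℝ) - 1) * exp (-(a * x)) := by
    intro x _
    rw [smul_eq_mul, log_exp, neg_neg, ← exp_mul, ← mul_assoc, ← exp_add, add_sub_cancel_right, rpow_natCast]
    ring_nf
  rw [setIntegral_congr_fun measurableSet_Ioi h,
    integral_rpow_mul_exp_neg_mul_Ioi (by positivity) ha, ← Nat.cast_add_one, rpow_natCast,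
    Nat.cast_add_one, Gamma_nat_eq_factorial, div_pow, one_pow, one_div_mul_eq_div]

lemma integral_Ioi_rpow_mul_max_neg_log_pow {a : ℝ} (ha : 0 < a) {n : ℕ} (hn : n ≠ 0) :
    ∫ s in Ioi 0, s ^ (a - 1) * max (-log s) 0 ^ n = n.factorial / a ^ (n + 1) := by
  have hvanish : ∀ s ∈ Ioi 0 \ Ioo 0 1, s ^ (a - 1) * max (-log s) 0 ^ n = 0 := by
    rintro s ⟨hs0, hs⟩
    have hs1 : 1 ≤ s := by simpa [mem_Ioi.1 hs0] using hs
    rw [max_eq_right (neg_nonpos.2 (log_nonneg hs1)), zero_pow hn, mul_zero]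
  have hpos : EqOn (fun s => s ^ (a - 1) * max (-log s) 0 ^ n)
      (fun s => s ^ (a - 1) * (-log s) ^ n) (Ioo 0 1) := fun s hs => by
    dsimp only
    rw [max_eq_left (neg_nonneg.2 (log_nonpos hs.1.le hs.2.le))]
  rw [setIntegral_eq_of_subset_of_forall_sdiff_eq_zero measurableSet_Ioi Ioo_subset_Ioi_self
    hvanish, setIntegral_congr_fun measurableSet_Ioo hpos, integral_Ioo_rpow_mul_neg_log_pow ha]

lemma integral_Ioi_rpow_mul_max_neg_log_mul_pow {a c : ℝ} (ha : 0 < a) (hc : 0 < c) {n : ℕ}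
    (hn : n ≠ 0) :
    ∫ t in Ioi 0, t ^ (a - 1) * max (-log (c * t)) 0 ^ n
      = n.factorial / (a ^ (n + 1) * c ^ a) := by
  have hscale : ∀ t ∈ Ioi (0 : ℝ), t ^ (a - 1) * max (-log (c * t)) 0 ^ n
      = (c ^ (a - 1))⁻¹ * ((c * t) ^ (a - 1) * max (-log (c * t)) 0 ^ n) := by
    intro t ht
    rw [mul_rpow hc.le (le_of_lt ht)]
    field_simp
  rw [setIntegral_congr_fun measurableSet_Ioi hscale, integral_const_mul,
    integral_comp_mul_left_Ioi (fun s => s ^ (a - 1) * max (-log s) 0 ^ n) 0 hc, mul_zero,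
    integral_Ioi_rpow_mul_max_neg_log_pow ha hn, smul_eq_mul, rpow_sub_one hc.ne']
  field_simp

theorem stmt_13 (p c : ℝ) (hp : 1 < p) (hc : 0 < c) (d : ℕ) (hd : 1 ≤ d)
    (u : ℝ → ℝ)
    (hu : ∀ t > (0:ℝ), u t =
      (1 / (d.factorial : ℝ)) * (max (-Real.log ((c * t) ^ (p - 1))) 0) ^ d) :
    p * ∫ t in Set.Ioi (0:ℝ), t ^ (p - 1) * u t = ((p - 1) / p) ^ d / c ^ p := by
  have hintegrand : ∀ t ∈ Ioi (0 : ℝ), t ^ (p - 1) * u t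
      = (p - 1) ^ d / d.factorial * (t ^ (p - 1) * max (-log (c * t)) 0 ^ d) := by
    intro t ht
    have hmax : max ((p - 1) * -log (c * t)) 0 = (p - 1) * max (-log (c * t)) 0 := by
      rw [mul_max_of_nonneg _ _ (by linarith), mul_zero]
    rw [hu t ht, log_rpow (mul_pos hc ht), neg_mul_eq_mul_neg, hmax, mul_pow]
    ring
  rw [setIntegral_congr_fun measurableSet_Ioi hintegrand, integral_const_mul,
    integral_Ioi_rpow_mul_max_neg_log_mul_pow (by linarith) hc (by omega), div_pow, pow_succ]
  field_simp
end

section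
/- Let p > 1, d ≥ 1, and 𝒞 be the set of decreasing functions u : (0,∞) → [0,∞) with p∫₀^∞ t^{p-1}u(t)dt ≤ A^p and q∫₀^∞ t^{q-1}u(t)dt ≤ B^q (for fixed q > 1, A, B > 0). Then the supremum over u ∈ 𝒞 of I(u) = ∫₀^∞ G(u(t)) dt, with G(s) = ∫₀ˢ e^{-(d!τ)^{1/d}} dτ, is finite and is attained by some u ∈ 𝒞. -/
/-!
Monotonicity and the constraint `p ∫ t^(p-1) u ≤ A^p` give the envelope `u t ≤ A^p t^(-p)`.
Since `G s ≤ min s K` with `K = ∫₀^∞ exp (-(d! τ)^(1/d)) dτ < ∞`, every `G ∘ u` in the class is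
dominated by the integrable function `min K (A^p t^(-p))`, so the supremum is finite. By Helly's
selection theorem (after the substitution `t = exp x`) a maximizing sequence has an a.e.
convergent subsequence; Fatou's lemma keeps the limit in the class and dominated convergence
shows that it attains the supremum.
-/

open MeasureTheory Set Filter Topology
open scoped ENNReal

lemma lintegral_Ioc_rpow_sub_one {p t : ℝ} (hp : 0 < p) (ht : 0 ≤ t) :
    ∫⁻ s in Ioc 0 t, ENNReal.ofReal (s ^ (p - 1)) = ENNReal.ofReal (t ^ p / p) := by
  have hint : IntegrableOn (fun s : ℝ => s ^ (p - 1)) (Ioc 0 t) :=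
    (intervalIntegrable_iff_integrableOn_Ioc_of_le ht).1
      (intervalIntegral.intervalIntegrable_rpow' (by linarith))
  rw [← ofReal_integral_eq_lintegral_ofReal hint
    (ae_restrict_of_forall_mem measurableSet_Ioc fun s hs => Real.rpow_nonneg hs.1.le _),
    ← intervalIntegral.integral_of_le ht, integral_rpow (Or.inl (by linarith))]
  simp [Real.zero_rpow hp.ne']

lemma rpow_mul_le_lintegral_of_antitoneOn {p t : ℝ} (hp : 0 < p) (ht : 0 < t) {u : ℝ → ℝ}
    (hu : AntitoneOn u (Ioi 0)) :
    ENNReal.ofReal (t ^ p * u t) ≤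
      ENNReal.ofReal p * ∫⁻ s in Ioi 0, ENNReal.ofReal (s ^ (p - 1) * u s) := by
  calc ENNReal.ofReal (t ^ p * u t)
      = ENNReal.ofReal p *
          ∫⁻ s in Ioc 0 t, ENNReal.ofReal (s ^ (p - 1)) * ENNReal.ofReal (u t) := by
        rw [lintegral_mul_const' _ _ ENNReal.ofReal_ne_top, lintegral_Ioc_rpow_sub_one hp ht.le,
          ← mul_assoc, ← ENNReal.ofReal_mul hp.le, ← ENNReal.ofReal_mul (by positivity)]
        congr 1
        field_simp
    _ ≤ ENNReal.ofReal p * ∫⁻ s in Ioc 0 t, ENNReal.ofReal (s ^ (p - 1) * u s) := by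
        gcongr 1
        refine setLIntegral_mono' measurableSet_Ioc fun s hs => ?_
        rw [← ENNReal.ofReal_mul (Real.rpow_nonneg hs.1.le _)]
        exact ENNReal.ofReal_le_ofReal
          (mul_le_mul_of_nonneg_left (hu hs.1 ht hs.2) (Real.rpow_nonneg hs.1.le _))
    _ ≤ _ := by gcongr; exact Ioc_subset_Ioi_self

lemma exists_subseq_tendsto_pi_of_isBounded {ι E : Type*} [Countable ι] [MetricSpace E]
    [ProperSpace E] {f : ℕ → ι → E} (hf : ∀ i, Bornology.IsBounded (range fun n => f n i)) :
    ∃ φ : ℕ → ℕ, StrictMono φ ∧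
      ∃ L : ι → E, ∀ i, Tendsto (fun k => f (φ k) i) atTop (𝓝 (L i)) := by
  obtain ⟨L, -, φ, hφ, hL⟩ :=
    (isCompact_univ_pi fun i => (hf i).isCompact_closure).tendsto_subseq
      (x := f) fun n => mem_univ_pi.2 fun i => subset_closure (mem_range_self n)
  exact ⟨φ, hφ, L, tendsto_pi_nhds.1 hL⟩

theorem exists_subseq_tendsto_of_antitone {h : ℕ → ℝ → ℝ} (hanti : ∀ n, Antitone (h n))
    (hnn : ∀ n x, 0 ≤ h n x) (hbdd : ∀ x, BddAbove (range fun n => h n x)) :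
    ∃ φ : ℕ → ℕ, StrictMono φ ∧ ∃ w : ℝ → ℝ, Antitone w ∧ (∀ x, 0 ≤ w x) ∧
      ∀ x, ContinuousAt w x → Tendsto (fun k => h (φ k) x) atTop (𝓝 (w x)) := by
  obtain ⟨φ, hφ, L, hL⟩ := exists_subseq_tendsto_pi_of_isBounded (f := fun n (r : ℚ) => h n r)
    fun r => (isBounded_iff_bddBelow_bddAbove).2
      ⟨⟨0, forall_mem_range.2 fun n => hnn n r⟩, hbdd r⟩
  have hL0 : ∀ r, 0 ≤ L r := fun r => ge_of_tendsto' (hL r) fun k => hnn _ _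
  have hLanti : ∀ r r' : ℚ, r ≤ r' → L r' ≤ L r := fun r r' hrr' =>
    le_of_tendsto_of_tendsto' (hL r') (hL r) fun k => hanti _ (by exact_mod_cast hrr')
  -- the right-continuous antitone extension of `L` from `ℚ` to `ℝ`
  set w : ℝ → ℝ := fun x => sSup (L '' {r : ℚ | x < r})
  have hne : ∀ x : ℝ, (L '' {r : ℚ | x < r}).Nonempty := fun x =>
    let ⟨r, hr⟩ := exists_rat_gt x; ⟨L r, r, hr, rfl⟩
  have hbdd' : ∀ x : ℝ, BddAbove (L '' {r : ℚ | x < r}) := by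
    intro x
    obtain ⟨r₀, hr₀⟩ := exists_rat_lt x
    exact ⟨L r₀, forall_mem_image.2 fun r hr => hLanti _ _ (by exact_mod_cast (hr₀.trans hr).le)⟩
  have hLw : ∀ (x : ℝ) (r : ℚ), x < r → L r ≤ w x := fun x r hr =>
    le_csSup (hbdd' x) ⟨r, hr, rfl⟩
  refine ⟨φ, hφ, w, fun x y hxy => ?_, fun x => ?_, fun x hx => tendsto_order.2 ⟨fun a ha => ?_,
    fun b hb => ?_⟩⟩
  · exact csSup_le (hne y) (forall_mem_image.2 fun r hr => hLw x r (hxy.trans_lt hr))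
  · obtain ⟨r, hr⟩ := exists_rat_gt x
    exact (hL0 r).trans (hLw x r hr)
  · obtain ⟨_, ⟨r, hxr, rfl⟩, har⟩ := exists_lt_of_lt_csSup (hne x) ha
    filter_upwards [(hL r).eventually (lt_mem_nhds har)] with k hk
    exact hk.trans_le (hanti _ hxr.le)
  · obtain ⟨y, hwy, hyx⟩ :=
      ((hx.mono_left nhdsWithin_le_nhds).eventually (gt_mem_nhds hb) |>.and
        (self_mem_nhdsWithin (s := Iio x))).exists
    obtain ⟨r, hyr, hrx⟩ := exists_rat_btwn (show y < x from hyx)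
    filter_upwards [(hL r).eventually (gt_mem_nhds ((hLw y r hyr).trans_lt hwy))] with k hk
    exact (hanti _ hrx.le).trans_lt hk

theorem exists_subseq_ae_tendsto_of_antitoneOn {u : ℕ → ℝ → ℝ}
    (hanti : ∀ n, AntitoneOn (u n) (Ioi 0)) (hnn : ∀ n, ∀ t ∈ Ioi (0:ℝ), 0 ≤ u n t)
    (hbdd : ∀ t ∈ Ioi (0:ℝ), BddAbove (range fun n => u n t)) :
    ∃ φ : ℕ → ℕ, StrictMono φ ∧ ∃ U : ℝ → ℝ, AntitoneOn U (Ioi 0) ∧ (∀ t ∈ Ioi (0:ℝ), 0 ≤ U t) ∧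
      ∀ᵐ t ∂(volume.restrict (Ioi 0)), Tendsto (fun k => u (φ k) t) atTop (𝓝 (U t)) := by
  obtain ⟨φ, hφ, w, hw, hw0, hlim⟩ := exists_subseq_tendsto_of_antitone
    (h := fun n x => u n (Real.exp x))
    (fun n x y hxy => hanti n (Real.exp_pos x) (Real.exp_pos y) (Real.exp_le_exp.2 hxy))
    (fun n x => hnn n _ (Real.exp_pos x)) (fun x => hbdd _ (Real.exp_pos x))
  have hN : volume (Real.exp '' {x | ¬ContinuousAt w x}) = 0 :=
    (hw.countable_not_continuousAt.image _).measure_zero _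
  refine ⟨φ, hφ, fun t => w (Real.log t), fun s hs t ht hst => hw (Real.log_le_log hs hst),
    fun t _ => hw0 _, ?_⟩
  filter_upwards [ae_restrict_mem measurableSet_Ioi,
    ae_restrict_of_ae (measure_eq_zero_iff_ae_notMem.1 hN)] with t ht htN
  have hcont : ContinuousAt w (Real.log t) := by
    by_contra hdisc
    exact htN ⟨_, hdisc, Real.exp_log ht⟩
  simpa only [Real.exp_log ht] using hlim _ hcont

theorem lintegral_le_of_ae_tendsto {α : Type*} [MeasurableSpace α] {μ : Measure α}
    {f : ℕ → α → ℝ≥0∞} {g : α → ℝ≥0∞} (hf : ∀ n, AEMeasurable (f n) μ)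
    (hlim : ∀ᵐ x ∂μ, Tendsto (fun n => f n x) atTop (𝓝 (g x))) {M : ℝ≥0∞}
    (hM : ∀ n, ∫⁻ x, f n x ∂μ ≤ M) : ∫⁻ x, g x ∂μ ≤ M :=
  calc ∫⁻ x, g x ∂μ = ∫⁻ x, liminf (fun n => f n x) atTop ∂μ :=
        lintegral_congr_ae (hlim.mono fun _ hx => hx.liminf_eq.symm)
    _ ≤ liminf (fun n => ∫⁻ x, f n x ∂μ) atTop := lintegral_liminf_le' hf
    _ ≤ M := liminf_le_of_frequently_le' (Frequently.of_forall hM)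

def MomentBound (p A : ℝ) (u : ℝ → ℝ) : Prop :=
  ENNReal.ofReal p * (∫⁻ t in Ioi (0:ℝ), ENNReal.ofReal (t ^ (p - 1) * u t)) ≤
    ENNReal.ofReal (A ^ p)

def momentClass (p A q B : ℝ) : Set (ℝ → ℝ) :=
  {u | AntitoneOn u (Ioi 0) ∧ (∀ t ∈ Ioi (0:ℝ), 0 ≤ u t) ∧ MomentBound p A u ∧ MomentBound q B u}

namespace MomentBound

variable {p A : ℝ} {u : ℝ → ℝ}

theorem le_rpow_neg (hp : 0 < p) (hA : 0 ≤ A) (hu : AntitoneOn u (Ioi 0))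
    (hb : MomentBound p A u) {t : ℝ} (ht : 0 < t) : u t ≤ A ^ p * t ^ (-p) := by
  have htp : 0 < t ^ p := Real.rpow_pos_of_pos ht p
  have h := (rpow_mul_le_lintegral_of_antitoneOn hp ht hu).trans hb
  rw [ENNReal.ofReal_le_ofReal_iff (Real.rpow_nonneg hA p)] at h
  rw [Real.rpow_neg ht.le, ← div_eq_mul_inv, le_div_iff₀ htp]
  linarith

theorem of_ae_tendsto {v : ℕ → ℝ → ℝ} (hv : ∀ n, AEMeasurable (v n) (volume.restrict (Ioi 0)))
    (hlim : ∀ᵐ t ∂(volume.restrict (Ioi 0)), Tendsto (fun n => v n t) atTop (𝓝 (u t)))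
    (hb : ∀ n, MomentBound p A (v n)) : MomentBound p A u := by
  unfold MomentBound at hb ⊢
  simp only [← lintegral_const_mul' _ _ ENNReal.ofReal_ne_top] at hb ⊢
  refine lintegral_le_of_ae_tendsto (fun n => ?_) ?_ hb
  · exact (((measurable_id.pow_const _).aemeasurable.mul (hv n)).ennreal_ofReal).const_mul _
  · filter_upwards [hlim] with t ht
    exact ENNReal.Tendsto.const_mul
      ((ENNReal.continuous_ofReal.tendsto _).comp (ht.const_mul _)) (Or.inr ENNReal.ofReal_ne_top)

end MomentBound

namespace momentClass

variable {p A q B : ℝ}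

theorem zero_mem : (0 : ℝ → ℝ) ∈ momentClass p A q B :=
  ⟨fun _ _ _ _ _ => le_rfl, fun _ _ => le_rfl, by simp [MomentBound], by simp [MomentBound]⟩

theorem exists_subseq_ae_tendsto (hp : 0 < p) (hA : 0 ≤ A) {v : ℕ → ℝ → ℝ}
    (hv : ∀ n, v n ∈ momentClass p A q B) :
    ∃ φ : ℕ → ℕ, StrictMono φ ∧ ∃ U ∈ momentClass p A q B,
      ∀ᵐ t ∂(volume.restrict (Ioi 0)), Tendsto (fun k => v (φ k) t) atTop (𝓝 (U t)) := by
  obtain ⟨φ, hφ, U, hU, hU0, hlim⟩ := exists_subseq_ae_tendsto_of_antitoneOn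
    (fun n => (hv n).1) (fun n => (hv n).2.1)
    (fun t ht => ⟨A ^ p * t ^ (-p), forall_mem_range.2 fun n =>
      (hv n).2.2.1.le_rpow_neg hp hA (hv n).1 ht⟩)
  have hmeas : ∀ k, AEMeasurable (v (φ k)) (volume.restrict (Ioi 0)) := fun k =>
    aemeasurable_restrict_of_antitoneOn measurableSet_Ioi (hv (φ k)).1
  exact ⟨φ, hφ, U, ⟨hU, hU0, .of_ae_tendsto hmeas hlim fun k => (hv (φ k)).2.2.1,
    .of_ae_tendsto hmeas hlim fun k => (hv (φ k)).2.2.2⟩, hlim⟩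

end momentClass

theorem lintegral_ofReal_min_rpow_neg_lt_top {p : ℝ} (hp : 1 < p) (K c : ℝ) :
    ∫⁻ t in Ioi (0:ℝ), ENNReal.ofReal (min K (c * t ^ (-p))) < ⊤ := by
  rw [← Ioc_union_Ioi_eq_Ioi zero_le_one,
    lintegral_union measurableSet_Ioi (Ioc_disjoint_Ioi le_rfl)]
  refine ENNReal.add_lt_top.2 ⟨?_, ?_⟩
  · calc ∫⁻ t in Ioc (0:ℝ) 1, ENNReal.ofReal (min K (c * t ^ (-p)))
        ≤ ∫⁻ _ in Ioc (0:ℝ) 1, ENNReal.ofReal K :=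
          lintegral_mono fun t => ENNReal.ofReal_le_ofReal (min_le_left _ _)
      _ < ⊤ := by simp
  · calc ∫⁻ t in Ioi (1:ℝ), ENNReal.ofReal (min K (c * t ^ (-p)))
        ≤ ∫⁻ t in Ioi (1:ℝ), ENNReal.ofReal (c * t ^ (-p)) :=
          lintegral_mono fun t => ENNReal.ofReal_le_ofReal (min_le_right _ _)
      _ < ⊤ := ((integrableOn_Ioi_rpow_of_lt (by linarith) one_pos).const_mul c).lintegral_lt_top

theorem momentClass.exists_isMaxOn_lintegral_comp {p A q B K : ℝ} (hp : 1 < p) (hA : 0 ≤ A)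
    {G : ℝ → ℝ} (hG : Continuous G) (hG_le : ∀ s, 0 ≤ s → G s ≤ s) (hG_bdd : ∀ s, 0 ≤ s → G s ≤ K) :
    ∃ u ∈ momentClass p A q B, (∫⁻ t in Ioi (0:ℝ), ENNReal.ofReal (G (u t))) < ⊤ ∧
      IsMaxOn (fun v => ∫⁻ t in Ioi (0:ℝ), ENNReal.ofReal (G (v t))) (momentClass p A q B) u := by
  set S := momentClass p A q B
  set J : (ℝ → ℝ) → ℝ≥0∞ := fun v => ∫⁻ t in Ioi (0:ℝ), ENNReal.ofReal (G (v t))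
  set Φ : ℝ → ℝ≥0∞ := fun t => ENNReal.ofReal (min K (A ^ p * t ^ (-p)))
  have hΦ : ∫⁻ t in Ioi (0:ℝ), Φ t < ⊤ := lintegral_ofReal_min_rpow_neg_lt_top hp K _
  have hdom : ∀ v ∈ S, ∀ t ∈ Ioi (0:ℝ), ENNReal.ofReal (G (v t)) ≤ Φ t := fun v hv t ht =>
    ENNReal.ofReal_le_ofReal <| le_min (hG_bdd _ (hv.2.1 t ht)) <|
      (hG_le _ (hv.2.1 t ht)).trans (hv.2.2.1.le_rpow_neg (by linarith) hA hv.1 ht)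
  have hJΦ : ∀ v ∈ S, J v ≤ ∫⁻ t in Ioi (0:ℝ), Φ t := fun v hv =>
    setLIntegral_mono' measurableSet_Ioi (hdom v hv)
  obtain ⟨_, -, hsup, hmem⟩ := exists_seq_tendsto_sSup
    ⟨_, mem_image_of_mem J momentClass.zero_mem⟩ (OrderTop.bddAbove (J '' S))
  choose v hvS hvJ using hmem
  obtain ⟨φ, hφ, U, hUS, hlim⟩ := momentClass.exists_subseq_ae_tendsto (by linarith) hA hvS
  have hJlim : Tendsto (fun k => J (v (φ k))) atTop (𝓝 (J U)) := by
    refine tendsto_lintegral_of_dominated_convergence' Φ (fun k => ?_) (fun k => ?_) hΦ.ne ?_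
    · exact (hG.measurable.comp_aemeasurable
        (aemeasurable_restrict_of_antitoneOn measurableSet_Ioi (hvS (φ k)).1)).ennreal_ofReal
    · exact (ae_restrict_iff' measurableSet_Ioi).2 (ae_of_all _ (hdom _ (hvS (φ k))))
    · filter_upwards [hlim] with t ht
      exact (ENNReal.continuous_ofReal.tendsto _).comp ((hG.tendsto _).comp ht)
  have hJU : J U = sSup (J '' S) := tendsto_nhds_unique hJlim
    (by simpa only [Function.comp_def, hvJ] using hsup.comp hφ.tendsto_atTop)
  exact ⟨U, hUS, (hJΦ U hUS).trans_lt hΦ, fun w hw =>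
    (le_sSup (mem_image_of_mem J hw)).trans_eq hJU.symm⟩

theorem continuous_exp_neg_mul_rpow (c : ℝ) {r : ℝ} (hr : 0 ≤ r) :
    Continuous fun τ : ℝ => Real.exp (-((c * τ) ^ r)) :=
  ((Real.continuous_rpow_const hr).comp (continuous_const_mul c)).neg.rexp

theorem integrableOn_exp_neg_mul_rpow {c r : ℝ} (hc : 0 < c) (hr : 0 < r) :
    IntegrableOn (fun τ : ℝ => Real.exp (-((c * τ) ^ r))) (Ioi 0) := by
  refine (integrableOn_rpow_mul_exp_neg_mul_rpow (s := 0) (by norm_num) hr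
    (Real.rpow_pos_of_pos hc r)).congr_fun (fun τ hτ => ?_) measurableSet_Ioi
  dsimp only
  rw [Real.rpow_zero, one_mul, Real.mul_rpow hc.le (le_of_lt hτ), neg_mul]

theorem integral_zero_le_self_of_le_one {f : ℝ → ℝ} (hf : Continuous f) {s : ℝ} (hs : 0 ≤ s)
    (hf1 : ∀ τ ∈ Icc 0 s, f τ ≤ 1) : ∫ τ in 0..s, f τ ≤ s := by
  simpa using intervalIntegral.integral_mono_on (μ := volume) hs (hf.intervalIntegrable 0 s)
    intervalIntegrable_const hf1

theorem integral_zero_le_integral_Ioi {f : ℝ → ℝ} (hf : IntegrableOn f (Ioi 0))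
    (hf0 : ∀ τ ∈ Ioi (0:ℝ), 0 ≤ f τ) {s : ℝ} (hs : 0 ≤ s) :
    ∫ τ in 0..s, f τ ≤ ∫ τ in Ioi 0, f τ := by
  rw [intervalIntegral.integral_of_le hs]
  exact setIntegral_mono_set hf ((ae_restrict_iff' measurableSet_Ioi).2 (ae_of_all _ hf0))
    Ioc_subset_Ioi_self.eventuallyLE

theorem stmt_18_general (p q A B : ℝ) (hp : 1 < p) (hA : 0 < A)
    (d : ℕ) (hd : 1 ≤ d)
    (G : ℝ → ℝ)
    (hG : ∀ s : ℝ, G s = ∫ τ in (0:ℝ)..s, Real.exp (-((d.factorial * τ) ^ ((d:ℝ)⁻¹))))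
    (C : (ℝ → ℝ) → Prop)
    (hC : ∀ u, C u ↔ (AntitoneOn u (Set.Ioi 0) ∧ (∀ t ∈ Set.Ioi (0:ℝ), 0 ≤ u t) ∧
      ENNReal.ofReal p * (∫⁻ t in Set.Ioi (0:ℝ), ENNReal.ofReal (t ^ (p - 1) * u t)) ≤
        ENNReal.ofReal (A ^ p) ∧
      ENNReal.ofReal q * (∫⁻ t in Set.Ioi (0:ℝ), ENNReal.ofReal (t ^ (q - 1) * u t)) ≤
        ENNReal.ofReal (B ^ q))) :
    ∃ u : ℝ → ℝ, C u ∧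
      (∫⁻ t in Set.Ioi (0:ℝ), ENNReal.ofReal (G (u t))) < ⊤ ∧
      ∀ v : ℝ → ℝ, C v →
        (∫⁻ t in Set.Ioi (0:ℝ), ENNReal.ofReal (G (v t))) ≤
          ∫⁻ t in Set.Ioi (0:ℝ), ENNReal.ofReal (G (u t)) := by
  have hc : (0:ℝ) < d.factorial := by exact_mod_cast d.factorial_pos
  have hr : (0:ℝ) < (d:ℝ)⁻¹ := inv_pos.2 (by exact_mod_cast hd)
  have hf := continuous_exp_neg_mul_rpow (d.factorial : ℝ) hr.le
  obtain rfl : G = fun s => ∫ τ in (0:ℝ)..s, Real.exp (-((d.factorial * τ) ^ ((d:ℝ)⁻¹))) :=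
    funext hG
  obtain rfl : C = (· ∈ momentClass p A q B) := funext fun u => propext (hC u)
  obtain ⟨u, hu, hfin, hmax⟩ :=
    momentClass.exists_isMaxOn_lintegral_comp (q := q) (B := B) hp hA.le
    (intervalIntegral.continuous_primitive (fun a b => hf.intervalIntegrable a b) 0)
    (fun s hs => integral_zero_le_self_of_le_one hf hs fun τ hτ =>
      Real.exp_le_one_iff.2 (neg_nonpos.2 (Real.rpow_nonneg (mul_nonneg hc.le hτ.1) _)))
    (fun s hs => integral_zero_le_integral_Ioi (integrableOn_exp_neg_mul_rpow hc hr)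
      (fun τ _ => (Real.exp_pos _).le) hs)
  exact ⟨u, hu, hfin, fun v hv => hmax hv⟩

theorem stmt_18 (p q A B : ℝ) (hp : 1 < p) (hq : 1 < q) (hA : 0 < A) (hB : 0 < B)
    (d : ℕ) (hd : 1 ≤ d)
    (G : ℝ → ℝ)
    (hG : ∀ s : ℝ, G s = ∫ τ in (0:ℝ)..s, Real.exp (-((d.factorial * τ) ^ ((d:ℝ)⁻¹))))
    (C : (ℝ → ℝ) → Prop)
    (hC : ∀ u, C u ↔ (AntitoneOn u (Set.Ioi 0) ∧ (∀ t ∈ Set.Ioi (0:ℝ), 0 ≤ u t) ∧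
      ENNReal.ofReal p * (∫⁻ t in Set.Ioi (0:ℝ), ENNReal.ofReal (t ^ (p - 1) * u t)) ≤
        ENNReal.ofReal (A ^ p) ∧
      ENNReal.ofReal q * (∫⁻ t in Set.Ioi (0:ℝ), ENNReal.ofReal (t ^ (q - 1) * u t)) ≤
        ENNReal.ofReal (B ^ q))) :
    ∃ u : ℝ → ℝ, C u ∧
      (∫⁻ t in Set.Ioi (0:ℝ), ENNReal.ofReal (G (u t))) < ⊤ ∧
      ∀ v : ℝ → ℝ, C v →
        (∫⁻ t in Set.Ioi (0:ℝ), ENNReal.ofReal (G (v t))) ≤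
          ∫⁻ t in Set.Ioi (0:ℝ), ENNReal.ofReal (G (u t)) :=
  stmt_18_general p q A B hp hA d hd G hG C hC
end
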